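/- For every real $\mu > 0$ and every $k \in \mathbb{N}$, the Taylor coefficients of $h_\mu$ alternate in sign: $(-1)^k f_k(\mu) > 0$. In particular $f_k(\mu)$ is positive for even $k$ and negative for odd $k$. -/

import Mathlib

open Complex Finset

/-- The function `h_μ(w) = exp(μ · Log((1-w)/(1+w)))`, defined via the principal
branch of the complex logarithm. -/
noncomputable def h (μ : ℝ) (w : ℂ) : ℂ :=
  Complex.exp ((μ : ℂ) * Complex.log ((1 - w) / (1 + w)))

/-- `f k μ` is the `k`-th Taylor coefficient of `h μ` at `w = 0`,
i.e. `h_μ^{(k)}(0)/k!`. -/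
noncomputable def f (μ : ℝ) (k : ℕ) : ℂ :=
  iteratedDeriv k (h μ) 0 / (Nat.factorial k : ℂ)

/-!
On the unit disc `h_μ` solves `(1 - w²) h' = -2μ h`. Differentiating this `k + 1` times at `0`
by Leibniz' rule (only the derivatives of order `0` and `2` of `1 - w²` survive there) gives
`h^{(k+2)}(0) = (k+1) k h^{(k)}(0) - 2μ h^{(k+1)}(0)`, with `h(0) = 1` and `h'(0) = -2μ`.
Hence `(-1)^k h^{(k)}(0)` obeys a recurrence with nonnegative coefficients and positive
initial values, so it is positive when `μ > 0`.
-/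

open scoped Topology

section Leibniz

variable {𝕜 : Type*} [NontriviallyNormedField 𝕜]

lemma iteratedDeriv_one_sub_sq_zero (i : ℕ) :
    iteratedDeriv i (fun w : 𝕜 => 1 - w ^ 2) 0 =
      (if i = 0 then 1 else 0) - (if i = 2 then 2 else 0) := by
  rcases i.eq_zero_or_pos with rfl | hi
  · simp
  · rw [iteratedDeriv_const_sub hi, iteratedDeriv_neg, iteratedDeriv_fun_pow_zero]
    simp [hi.ne']

lemma iteratedDeriv_succ_one_sub_sq_mul_deriv {g : 𝕜 → 𝕜} {k : ℕ}
    (hg : ContDiffAt 𝕜 (k + 2) g 0) :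
    iteratedDeriv (k + 1) (fun w => (1 - w ^ 2) * deriv g w) 0 =
      iteratedDeriv (k + 2) g 0 - (k + 1) * k * iteratedDeriv k g 0 := by
  have hg' : ContDiffAt 𝕜 (k + 1) (deriv g) 0 := hg.derivWithin (by norm_cast)
  rw [iteratedDeriv_fun_mul (by fun_prop) hg', iteratedDeriv_succ' (n := k + 1)]
  simp only [iteratedDeriv_one_sub_sq_zero, sub_mul, mul_sub, ite_mul, mul_ite, zero_mul,
    mul_zero, sum_sub_distrib, sum_ite_eq', mem_range]
  rcases k with _ | j
  · simp
  · have hchoose : ((j + 1 + 1).choose 2 : 𝕜) * 2 = (j + 1 + 1) * (j + 1) := by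
      have := congrArg (Nat.cast : ℕ → 𝕜) (Nat.add_one_mul_choose_eq (j + 1) 1)
      push_cast [Nat.choose_one_right] at this
      exact this.symm
    rw [if_pos (by omega), if_pos (by omega), hchoose]
    simp [iteratedDeriv_succ' (n := j)]

end Leibniz

section UnitDisc

variable {w : ℂ}

lemma one_add_ne_zero_of_norm_lt_one (hw : ‖w‖ < 1) : 1 + w ≠ 0 :=
  fun hw' => by simp [eq_neg_of_add_eq_zero_right hw'] at hw

lemma one_sub_ne_zero_of_norm_lt_one (hw : ‖w‖ < 1) : 1 - w ≠ 0 :=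
  sub_ne_zero.mpr fun hw' => by simp [← hw'] at hw

lemma one_sub_sq_ne_zero_of_norm_lt_one (hw : ‖w‖ < 1) : 1 - w ^ 2 ≠ 0 := by
  rw [show 1 - w ^ 2 = (1 - w) * (1 + w) by ring]
  exact mul_ne_zero (one_sub_ne_zero_of_norm_lt_one hw) (one_add_ne_zero_of_norm_lt_one hw)

lemma re_one_sub_div_one_add_pos (hw : ‖w‖ < 1) : 0 < ((1 - w) / (1 + w)).re := by
  have hre : ((1 - w) / (1 + w)).re = (1 - ‖w‖ ^ 2) / normSq (1 + w) := by
    rw [div_re, ← add_div, ← normSq_eq_norm_sq, normSq_apply, normSq_apply]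
    simp only [sub_re, add_re, sub_im, add_im, one_re, one_im]
    ring
  rw [hre]
  exact div_pos (by nlinarith [norm_nonneg w])
    (normSq_pos.mpr (one_add_ne_zero_of_norm_lt_one hw))

end UnitDisc

lemma hasDerivAt_h (μ : ℝ) {w : ℂ} (hw : ‖w‖ < 1) :
    HasDerivAt (h μ) (-2 * μ / (1 - w ^ 2) * h μ w) w := by
  have hq : HasDerivAt (fun z : ℂ => (1 - z) / (1 + z))
      ((-1 * (1 + w) - (1 - w) * 1) / (1 + w) ^ 2) w :=
    ((hasDerivAt_id w).const_sub 1).div ((hasDerivAt_id w).const_add 1)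
      (one_add_ne_zero_of_norm_lt_one hw)
  have hslit : (1 - w) / (1 + w) ∈ slitPlane :=
    mem_slitPlane_iff.mpr (Or.inl (re_one_sub_div_one_add_pos hw))
  refine (((hasDerivAt_log hslit).comp w hq).const_mul (μ : ℂ)).cexp.congr_deriv ?_
  change h μ w * _ = _
  have := one_add_ne_zero_of_norm_lt_one hw
  have := one_sub_ne_zero_of_norm_lt_one hw
  have := one_sub_sq_ne_zero_of_norm_lt_one hw
  field_simp
  ring

lemma analyticAt_h (μ : ℝ) : AnalyticAt ℂ (h μ) 0 :=
  DifferentiableOn.analyticAt (s := Metric.ball 0 1)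
    (fun _ hw => (hasDerivAt_h μ (mem_ball_zero_iff.mp hw)).differentiableAt.differentiableWithinAt)
    (Metric.ball_mem_nhds 0 one_pos)

lemma one_sub_sq_mul_deriv_h_eventuallyEq (μ : ℝ) :
    (fun w => (1 - w ^ 2) * deriv (h μ) w) =ᶠ[𝓝 0] fun w => -2 * μ * h μ w := by
  filter_upwards [Metric.ball_mem_nhds (0 : ℂ) one_pos] with w hw
  have hw' : ‖w‖ < 1 := mem_ball_zero_iff.mp hw
  rw [(hasDerivAt_h μ hw').deriv]
  field_simp [one_sub_sq_ne_zero_of_norm_lt_one hw']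

lemma iteratedDeriv_h_add_two (μ : ℝ) (k : ℕ) :
    iteratedDeriv (k + 2) (h μ) 0 =
      (k + 1) * k * iteratedDeriv k (h μ) 0 - 2 * μ * iteratedDeriv (k + 1) (h μ) 0 := by
  have hode := (one_sub_sq_mul_deriv_h_eventuallyEq μ).iteratedDeriv_eq (k + 1)
  rw [iteratedDeriv_succ_one_sub_sq_mul_deriv (analyticAt_h μ).contDiffAt,
    iteratedDeriv_const_mul_field] at hode
  linear_combination hode

noncomputable def hDerivNorm (μ : ℝ) : ℕ → ℝ
  | 0 => 1
  | 1 => 2 * μ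
  | k + 2 => (k + 1) * k * hDerivNorm μ k + 2 * μ * hDerivNorm μ (k + 1)

lemma hDerivNorm_pos {μ : ℝ} (hμ : 0 < μ) : ∀ k, 0 < hDerivNorm μ k
  | 0 => one_pos
  | 1 => by simp only [hDerivNorm]; positivity
  | k + 2 => by
    have := hDerivNorm_pos hμ k
    have := hDerivNorm_pos hμ (k + 1)
    simp only [hDerivNorm]
    positivity

lemma iteratedDeriv_h_zero (μ : ℝ) : ∀ k, iteratedDeriv k (h μ) 0 = (-1) ^ k * hDerivNorm μ k
  | 0 => by simp [h, hDerivNorm]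
  | 1 => by
    rw [iteratedDeriv_one, (hasDerivAt_h μ (by simp)).deriv]
    simp [h, hDerivNorm]
  | k + 2 => by
    rw [iteratedDeriv_h_add_two, iteratedDeriv_h_zero μ k, iteratedDeriv_h_zero μ (k + 1),
      hDerivNorm]
    push_cast
    ring

/-- For `μ > 0` the Taylor coefficients of `h μ` alternate in sign: each `f_k(μ)` is a
real number `r` with `(-1)^k f_k(μ) = (-1)^k r` coming from a positive real, i.e.
`f_k(μ) = (-1)^k r` with `r > 0`.  In particular `f_k(μ)` is positive for even `k`
and negative for odd `k`. -/
theorem f_alternating_sign (μ : ℝ) (hμ : 0 < μ) (k : ℕ) :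
    ∃ r : ℝ, 0 < r ∧ f μ k = (-1) ^ k * (r : ℂ) := by
  refine ⟨hDerivNorm μ k / k.factorial, div_pos (hDerivNorm_pos hμ k) (by positivity), ?_⟩
  rw [f, iteratedDeriv_h_zero]
  push_cast
  ring
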